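/- Let d ≥ s ≥ 2 and let h be a finite O-sequence of multiplicity d and length s with h ≠ (1, d-s+1, 1^{s-2}). Let i = max{1 ≤ j ≤ s-1 : h_j > 1}; then i ≥ 2 and the sequence h - e_i + e_1, obtained by decreasing h_i by 1 and increasing h_1 by 1, is a finite O-sequence of multiplicity d and length s. Moreover, iterating this operation starting from any finite O-sequence of multiplicity d and length s reaches (1, d-s+1, 1^{s-2}) after finitely many steps. -/

import Mathlib

/-- The Macaulay bound `a^⟨t⟩`: if `a = C(k_t,t) + C(k_{t-1},t-1) + ⋯ + C(k_j,j)` is the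
binomial expansion of `a` in base `t`, then `a^⟨t⟩ = C(k_t+1,t+1) + ⋯ + C(k_j+1,j+1)`.
Computed greedily; `mac t a = a^⟨t⟩` for `t ≥ 1`. -/
def mac : ℕ → ℕ → ℕ
  | 0, _ => 0
  | t+1, a =>
    if a = 0 then 0
    else
      Nat.choose (Nat.findGreatest (fun n => Nat.choose n (t+1) ≤ a) (a + t + 1) + 1) (t+2) +
        mac t (a - Nat.choose (Nat.findGreatest (fun n => Nat.choose n (t+1) ≤ a) (a + t + 1)) (t+1))

/-- `h : ℕ → ℕ` is a finite O-sequence of length `s`: `h 0 = 1`, the entries `h 0, …, h (s-1)`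
are positive, entries from index `s` on are zero, and `h (t+1) ≤ (h t)^⟨t⟩` for all `t ≥ 1`. -/
def IsOSeq (h : ℕ → ℕ) (s : ℕ) : Prop :=
  h 0 = 1 ∧ (∀ i, 0 < h i ↔ i < s) ∧ ∀ t, 1 ≤ t → h (t + 1) ≤ mac t (h t)

/-- The multiplicity `e(h) = h_0 + ⋯ + h_{s-1}` of a finite O-sequence of length `s`. -/
def mult (h : ℕ → ℕ) (s : ℕ) : ℕ := ∑ i ∈ Finset.range s, h i

/-- The genus `g(h) = Σ_{j=2}^{s-1} (j-1)·h_j` of a finite O-sequence of length `s`. -/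
def genus (h : ℕ → ℕ) (s : ℕ) : ℕ := ∑ j ∈ Finset.range s, (j - 1) * h j

/-- The sequence obtained from `h` by increasing the `i`-th entry by `1`, i.e. `h + e_i`. -/
def addE (h : ℕ → ℕ) (i : ℕ) : ℕ → ℕ := fun j => if j = i then h j + 1 else h j

/-- The sequence obtained from `h` by decreasing the `i`-th entry by `1`, i.e. `h - e_i`. -/
def subE (h : ℕ → ℕ) (i : ℕ) : ℕ → ℕ := fun j => if j = i then h j - 1 else h j

/-- The total order on finite O-sequences of the same length: `oLT h k` iff `h_ℓ < k_ℓ`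
where `ℓ = max{ j : h_j ≠ k_j }`. -/
def oLT (h k : ℕ → ℕ) : Prop := ∃ ℓ, h ℓ < k ℓ ∧ ∀ j, ℓ < j → h j = k j

/-- The set of genera of finite O-sequences of multiplicity `d` and length `s`. -/
def genusSet (d s : ℕ) : Set ℕ := {g | ∃ h, IsOSeq h s ∧ mult h s = d ∧ genus h s = g}

/-- `G_d`: the set of genera of finite O-sequences of multiplicity `d` (of any length). -/
def GSet (d : ℕ) : Set ℕ := {g | ∃ h s, IsOSeq h s ∧ mult h s = d ∧ genus h s = g}

/-- `g` is a gap in `R_d = [0, C(d-1,2)]`: it lies in the range but is not the genus of any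
finite O-sequence of multiplicity `d`. -/
def IsGap (d g : ℕ) : Prop :=
  g ≤ Nat.choose (d - 1) 2 ∧ ∀ h s, IsOSeq h s → mult h s = d → genus h s ≠ g

/-- The O-sequence `(1, d-s+1, 1^{s-2})`, minimal in `𝒢_d^s`. -/
def minSeq (d s : ℕ) : ℕ → ℕ :=
  fun j => if j = 0 then 1 else if j = 1 then d - s + 1 else if j < s then 1 else 0

/-- The O-sequence `(1, 2^{d-s}, 1^{2s-d-1})`, maximal in `𝒢_d^s`. -/
def maxSeq (d s : ℕ) : ℕ → ℕ :=
  fun j => if j = 0 then 1 else if j ≤ d - s then 2 else if j < s then 1 else 0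

/-- The O-sequence `(1, d-1)`. -/
def twoSeq (d : ℕ) : ℕ → ℕ := fun j => if j = 0 then 1 else if j = 1 then d - 1 else 0

/-- The operation `h ↦ h - e_{s-1} + e_1` on a sequence of length `s`. -/
def downUp (h : ℕ → ℕ) (s : ℕ) : ℕ → ℕ :=
  fun j => if j = s - 1 then h j - 1 else if j = 1 then h j + 1 else h j

/-- The largest index `1 ≤ j ≤ s-1` with `h j > 1` (and `0` if there is none). -/
def topIdx (h : ℕ → ℕ) (s : ℕ) : ℕ := Nat.findGreatest (fun j => 1 < h j) (s - 1)

/-- The operation `h ↦ h - e_i + e_1` where `i = topIdx h s`. -/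
def shiftDown (h : ℕ → ℕ) (s : ℕ) : ℕ → ℕ :=
  fun j => if j = topIdx h s then h j - 1 else if j = 1 then h j + 1 else h j

/-- Auxiliary list `[m_n, m_{n-1}, …, m_1]` for the recursively defined sequence `(m_d)`. -/
def mListAux : ℕ → List ℕ
  | 0 => []
  | n+1 =>
    let prev := mListAux n
    let newVal :=
      if n = 0 then 0
      else
        (List.range' 2 (n - 1)).foldl
          (fun M k =>
            if Nat.choose k 2 - 1 ≤ M then max M (prev.getD (k - 1) 0 + Nat.choose k 2) else M)
          (prev.getD 0 0)
    newVal :: prev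

/-- The sequence `(m_d)_{d ≥ 1}`: `m_1 = 0` and, for `d ≥ 2`, `m_d` is obtained from
`M := m_{d-1}` by running over `k = 2, …, d-1` and replacing `M` by
`max M (m_{d-k} + C(k,2))` whenever `C(k,2) - 1 ≤ M`. -/
def mSeq (d : ℕ) : ℕ := (mListAux d).getD 0 0

/-!
The move `h ↦ h - e_i + e_1` at the top index `i ≥ 2` keeps `h` an O-sequence: raising `h_1`
only relaxes `h_2 ≤ C(h_1 + 1, 2)`, lowering `h_i` can only endanger the next condition, and
that one survives because `h_{i+1} ≤ 1 ≤ (h_i - 1)^⟨i⟩`. The multiplicity is unchanged while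
the genus drops by `i - 1 ≥ 1`, so iterating the move terminates; it can only stop at a sequence
whose entries beyond index `1` all equal `1`, which the multiplicity pins down as
`(1, d-s+1, 1^{s-2})`.
-/

open Finset

lemma mac_one (a : ℕ) : mac 1 a = Nat.choose (a + 1) 2 := by
  rcases Nat.eq_zero_or_pos a with rfl | ha
  · simp [mac]
  · have hg : Nat.findGreatest (fun n => Nat.choose n (0 + 1) ≤ a) (a + 0 + 1) = a := by
      rw [Nat.findGreatest_eq_iff]
      exact ⟨by omega, fun _ => by simp, fun n hn _ => by simp; omega⟩
    rw [show (1 : ℕ) = 0 + 1 from rfl, mac, if_neg (by omega), hg]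
    simp [mac]

lemma mac_one_mono {a b : ℕ} (hab : a ≤ b) : mac 1 a ≤ mac 1 b := by
  rw [mac_one, mac_one]
  exact Nat.choose_le_choose 2 (by omega)

lemma mac_pos {t a : ℕ} (ht : 1 ≤ t) (ha : 0 < a) : 0 < mac t a := by
  obtain ⟨t, rfl⟩ : ∃ t', t = t' + 1 := ⟨t - 1, by omega⟩
  have hk : t + 1 ≤ Nat.findGreatest (fun n => Nat.choose n (t + 1) ≤ a) (a + t + 1) :=
    Nat.le_findGreatest (by omega) (by simp [Nat.choose_self]; omega)
  rw [mac, if_neg (by omega)]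
  exact Nat.add_pos_left (Nat.choose_pos (by omega)) _

lemma sum_mul_addE (w h : ℕ → ℕ) {i s : ℕ} (hi : i < s) :
    ∑ j ∈ range s, w j * addE h i j = ∑ j ∈ range s, w j * h j + w i := by
  have hterm : ∀ j, w j * addE h i j = w j * h j + if j = i then w j else 0 := by
    intro j
    unfold addE
    split_ifs <;> ring
  simp only [hterm, sum_add_distrib, sum_ite_eq', mem_range, if_pos hi]

lemma sum_mul_subE (w h : ℕ → ℕ) {i s : ℕ} (hi : i < s) (hpos : 0 < h i) :
    ∑ j ∈ range s, w j * subE h i j + w i = ∑ j ∈ range s, w j * h j := by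
  have hterm : ∀ j, w j * subE h i j + (if j = i then w j else 0) = w j * h j := by
    intro j
    unfold subE
    split_ifs with hj
    · subst hj
      rw [← Nat.mul_succ, Nat.succ_eq_add_one, Nat.sub_add_cancel hpos]
    · rfl
  have := sum_add_distrib (s := range s) (f := fun j => w j * subE h i j)
    (g := fun j => if j = i then w j else 0)
  simp only [hterm, sum_ite_eq', mem_range, if_pos hi] at this
  exact this.symm

lemma topIdx_le (h : ℕ → ℕ) (s : ℕ) : topIdx h s ≤ s - 1 := Nat.findGreatest_le _

lemma one_lt_apply_topIdx {h : ℕ → ℕ} {s : ℕ} (hi : topIdx h s ≠ 0) : 1 < h (topIdx h s) :=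
  Nat.findGreatest_of_ne_zero (P := fun j => 1 < h j) rfl hi

lemma le_one_of_topIdx_lt {h : ℕ → ℕ} {s j : ℕ} (hj : topIdx h s < j) (hjs : j ≤ s - 1) :
    h j ≤ 1 :=
  not_lt.mp (Nat.findGreatest_is_greatest (P := fun j => 1 < h j) hj hjs)

lemma shiftDown_eq_addE_subE {h : ℕ → ℕ} {s : ℕ} (hi : topIdx h s ≠ 1) :
    shiftDown h s = addE (subE h (topIdx h s)) 1 := by
  funext j
  unfold shiftDown addE subE
  split_ifs <;> omega

lemma shiftDown_le {h : ℕ → ℕ} {s j : ℕ} (hj : j ≠ 1) : shiftDown h s j ≤ h j := by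
  unfold shiftDown
  split_ifs <;> omega

lemma le_shiftDown {h : ℕ → ℕ} {s j : ℕ} (hj : j ≠ topIdx h s) : h j ≤ shiftDown h s j := by
  unfold shiftDown
  split_ifs <;> omega

lemma sum_mul_shiftDown (w h : ℕ → ℕ) {s : ℕ} (hi : 2 ≤ topIdx h s) :
    ∑ j ∈ range s, w j * shiftDown h s j + w (topIdx h s) =
      ∑ j ∈ range s, w j * h j + w 1 := by
  have his := topIdx_le h s
  have hpos : 1 < h (topIdx h s) := one_lt_apply_topIdx (by omega)
  rw [shiftDown_eq_addE_subE (by omega), sum_mul_addE _ _ (by omega), add_right_comm,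
    sum_mul_subE _ _ (by omega) (by omega)]

lemma mult_shiftDown {h : ℕ → ℕ} {s : ℕ} (hi : 2 ≤ topIdx h s) :
    mult (shiftDown h s) s = mult h s := by
  simpa [mult] using sum_mul_shiftDown (fun _ => 1) h hi

lemma genus_shiftDown_lt {h : ℕ → ℕ} {s : ℕ} (hi : 2 ≤ topIdx h s) :
    genus (shiftDown h s) s < genus h s := by
  have := sum_mul_shiftDown (fun j => j - 1) h hi
  simp only [Nat.sub_self, add_zero] at this
  unfold genus
  omega

namespace IsOSeq

variable {h : ℕ → ℕ} {s : ℕ}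

lemma pos (hO : IsOSeq h s) {j : ℕ} (hj : j < s) : 0 < h j := (hO.2.1 j).mpr hj

lemma eq_zero (hO : IsOSeq h s) {j : ℕ} (hj : s ≤ j) : h j = 0 :=
  Nat.eq_zero_of_not_pos fun hpos => absurd ((hO.2.1 j).mp hpos) (by omega)

lemma mult_eq_of_topIdx_lt_two (hO : IsOSeq h s) (hs : 2 ≤ s) (hi : topIdx h s < 2) :
    mult h s = h 1 + (s - 1) := by
  have hterm : ∀ j ∈ range s, h j = 1 + if j = 1 then h 1 - 1 else 0 := by
    intro j hj
    have hjs := mem_range.mp hj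
    have hpos := hO.pos hjs
    rcases Nat.lt_or_ge j 2 with hj2 | hj2
    · interval_cases j
      · simp [hO.1]
      · simp only [↓reduceIte]; omega
    · simp only [if_neg (show j ≠ 1 by omega)]
      have := le_one_of_topIdx_lt (show topIdx h s < j by omega) (show j ≤ s - 1 by omega)
      omega
  rw [mult, sum_congr rfl hterm, sum_add_distrib, sum_ite_eq', if_pos (mem_range.mpr hs)]
  have := hO.pos (show 1 < s by omega)
  simp only [sum_const, card_range, smul_eq_mul, mul_one]
  omega

lemma two_le_topIdx (hO : IsOSeq h s) (hs : 2 ≤ s) (hne : h ≠ minSeq (mult h s) s) :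
    2 ≤ topIdx h s := by
  by_contra! hi
  have hmult := hO.mult_eq_of_topIdx_lt_two hs hi
  refine hne (funext fun j => ?_)
  unfold minSeq
  rcases Nat.lt_or_ge j 2 with hj2 | hj2
  · interval_cases j
    · simpa using hO.1
    · have := hO.pos (show 1 < s by omega)
      simp only [one_ne_zero, ↓reduceIte]
      omega
  · simp only [if_neg (show j ≠ 0 by omega), if_neg (show j ≠ 1 by omega)]
    split_ifs with hjs
    · have := le_one_of_topIdx_lt (show topIdx h s < j by omega) (show j ≤ s - 1 by omega)
      have := hO.pos hjs
      omega
    · exact hO.eq_zero (by omega)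

lemma shiftDown (hO : IsOSeq h s) (hi : 2 ≤ topIdx h s) : IsOSeq (shiftDown h s) s := by
  have his : topIdx h s < s := by have := topIdx_le h s; omega
  have hhi : 1 < h (topIdx h s) := one_lt_apply_topIdx (by omega)
  refine ⟨?_, fun j => ?_, fun t ht => ?_⟩
  · simpa [_root_.shiftDown, show 0 ≠ topIdx h s by omega] using hO.1
  · unfold _root_.shiftDown
    split_ifs with hji hj1
    · subst hji; omega
    · subst hj1; omega
    · exact hO.2.1 j
  · by_cases hti : t = topIdx h s
    · rw [← hti] at hhi
      have hnext : h (t + 1) ≤ 1 := by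
        rcases Nat.lt_or_ge (t + 1) s with hlt | hge
        · exact le_one_of_topIdx_lt (s := s) (by omega) (by omega)
        · rw [hO.eq_zero hge]; omega
      have hval : _root_.shiftDown h s t = h t - 1 := if_pos hti
      calc _root_.shiftDown h s (t + 1) ≤ h (t + 1) := shiftDown_le (by omega)
        _ ≤ 1 := hnext
        _ ≤ mac t (_root_.shiftDown h s t) := by rw [hval]; exact mac_pos ht (by omega)
    · have hmono : mac t (h t) ≤ mac t (_root_.shiftDown h s t) := by
        by_cases ht1 : t = 1
        · subst ht1; exact mac_one_mono (le_shiftDown hti)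
        · rw [show _root_.shiftDown h s t = h t by simp [_root_.shiftDown, hti, ht1]]
      calc _root_.shiftDown h s (t + 1) ≤ h (t + 1) := shiftDown_le (by omega)
        _ ≤ mac t (h t) := hO.2.2 t ht
        _ ≤ mac t (_root_.shiftDown h s t) := hmono

end IsOSeq

lemma exists_iterate_shiftDown_eq_minSeq {s : ℕ} (hs : 2 ≤ s) {k : ℕ → ℕ} (hO : IsOSeq k s) :
    ∃ N, (fun h => shiftDown h s)^[N] k = minSeq (mult k s) s ∧
      ∀ m < N, IsOSeq ((fun h => shiftDown h s)^[m] k) s ∧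
        (fun h => shiftDown h s)^[m] k ≠ minSeq (mult k s) s := by
  induction hg : genus k s using Nat.strong_induction_on generalizing k with
  | _ g ih =>
    by_cases hk : k = minSeq (mult k s) s
    · exact ⟨0, hk, fun m hm => absurd hm (Nat.not_lt_zero m)⟩
    have hi := hO.two_le_topIdx hs hk
    obtain ⟨N, hN, hchain⟩ :=
      ih _ (hg ▸ genus_shiftDown_lt hi) (hO.shiftDown hi) rfl
    rw [mult_shiftDown hi] at hN hchain
    refine ⟨N + 1, hN, fun m hm => ?_⟩
    rcases m with _ | m
    · exact ⟨hO, hk⟩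
    · exact hchain m (by omega)

theorem stmt3_general (h : ℕ → ℕ) (s d : ℕ) (hs : 2 ≤ s) (hO : IsOSeq h s)
    (he : mult h s = d) (hne : h ≠ minSeq d s) :
    2 ≤ topIdx h s ∧ IsOSeq (shiftDown h s) s ∧ mult (shiftDown h s) s = d ∧
    (∀ k : ℕ → ℕ, IsOSeq k s → mult k s = d →
      ∃ (N : ℕ) (c : ℕ → ℕ → ℕ),
        c 0 = k ∧ c N = minSeq d s ∧
        (∀ m, m < N → IsOSeq (c m) s ∧ c m ≠ minSeq d s ∧ c (m + 1) = shiftDown (c m) s)) := by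
  subst he
  have hi := hO.two_le_topIdx hs hne
  refine ⟨hi, hO.shiftDown hi, mult_shiftDown hi, fun k hOk hmk => ?_⟩
  obtain ⟨N, hN, hchain⟩ := exists_iterate_shiftDown_eq_minSeq hs hOk
  rw [hmk] at hN hchain
  refine ⟨N, fun m => (fun h => shiftDown h s)^[m] k, rfl, hN, fun m hm => ?_⟩
  exact ⟨(hchain m hm).1, (hchain m hm).2, Function.iterate_succ_apply' _ _ _⟩

/-- Let `d ≥ s ≥ 2` and let `h` be a finite O-sequence of multiplicity `d`
and length `s` with `h ≠ (1, d-s+1, 1^{s-2})`. Then `i = max{1 ≤ j ≤ s-1 : h_j > 1}`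
satisfies `i ≥ 2`, and `h - e_i + e_1` is a finite O-sequence of multiplicity `d` and length
`s`. Moreover, iterating this operation starting from any finite O-sequence of multiplicity
`d` and length `s` reaches `(1, d-s+1, 1^{s-2})` after finitely many steps. -/
theorem stmt3 (h : ℕ → ℕ) (s d : ℕ) (hs : 2 ≤ s) (hsd : s ≤ d) (hO : IsOSeq h s)
    (he : mult h s = d) (hne : h ≠ minSeq d s) :
    2 ≤ topIdx h s ∧ IsOSeq (shiftDown h s) s ∧ mult (shiftDown h s) s = d ∧
    (∀ k : ℕ → ℕ, IsOSeq k s → mult k s = d →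
      ∃ (N : ℕ) (c : ℕ → ℕ → ℕ),
        c 0 = k ∧ c N = minSeq d s ∧
        (∀ m, m < N → IsOSeq (c m) s ∧ c m ≠ minSeq d s ∧ c (m + 1) = shiftDown (c m) s)) :=
  stmt3_general h s d hs hO he hne
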